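/- arXiv:1904.04979 — 2 statements merged into one kernel-verified Lean document; each statement's English description precedes it below -/
import Mathlib

section
/- Let G be a finite group, L a finite G-lattice with a family of nonempty sublattices L_H as in the lattice Burnside ring setting, H ≤ G, and (K,s),(U,t) ∈ S(H,M_L). Set inv_U((H/K)_s)_{≥t} = {hK ∈ H/K : U ≤ ʰK and t ≤ ʰs}. Then for any subgroup F of W_H(U,t), one has Σ_{rU ∈ F} #{hK ∈ inv_U((H/K)_s)_{≥t} : ⟨r⟩U ≤ ʰK} ≡ 0 (mod |F|). -/
set_option linter.unusedSectionVars false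
set_option linter.unusedVariables false

open scoped Classical

namespace LB
noncomputable section

variable {G : Type*} [Group G]

/-- The conjugate subgroup `ᵍK = gKg⁻¹`. -/
def conjS (g : G) (K : Subgroup G) : Subgroup G :=
  K.map ((MulAut.conj g).toMonoidHom)

theorem mem_conjS {g x : G} {K : Subgroup G} : x ∈ conjS g K ↔ g⁻¹ * x * g ∈ K := by
  unfold conjS
  rw [Subgroup.mem_map]
  constructor
  · rintro ⟨y, hy, rfl⟩
    have h2 : g⁻¹ * ((MulAut.conj g).toMonoidHom y) * g = y := by
      simp only [MulEquiv.coe_toMonoidHom, MulAut.conj_apply]; group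
    rw [h2]; exact hy
  · intro h
    refine ⟨g⁻¹ * x * g, h, ?_⟩
    simp only [MulEquiv.coe_toMonoidHom, MulAut.conj_apply]; group

theorem conjS_mono (g : G) {K K' : Subgroup G} (h : K ≤ K') : conjS g K ≤ conjS g K' :=
  Subgroup.map_mono h

theorem conjS_one (K : Subgroup G) : conjS 1 K = K := by
  ext x; simp [mem_conjS]

theorem conjS_mul (g r : G) (K : Subgroup G) : conjS g (conjS r K) = conjS (g * r) K := by
  ext x
  rw [mem_conjS, mem_conjS, mem_conjS,
    show r⁻¹ * (g⁻¹ * x * g) * r = (g * r)⁻¹ * x * (g * r) by group]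

/-- The Möbius function of a finite partial order. -/
def mob {α : Type*} [PartialOrder α] [Finite α] (a b : α) : ℤ :=
  letI : Fintype α := Fintype.ofFinite α
  letI : DecidableRel ((· < ·) : α → α → Prop) := Classical.decRel _
  letI : LocallyFiniteOrder α := Fintype.toLocallyFiniteOrder
  IncidenceAlgebra.mu ℤ a b

/-- A family of nonempty sublattices `L_H ⊆ L` of a finite `G`-lattice `L`
(for `H ≤ G`) satisfying the conditions of Proposition 4.2 of the paper; the binary
relation of `L` is required to be invariant under `G` (field `smul_le`).
The data `top K` is the greatest element `sup L_K` of the sublattice `L_K`. -/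
structure SubLatticeFamily (G : Type*) [Group G] (L : Type*) [Lattice L] [MulAction G L] where
  smul_le : ∀ (g : G) (x y : L), x ≤ y → g • x ≤ g • y
  S : Subgroup G → Set L
  nonempty : ∀ K, (S K).Nonempty
  inf_mem : ∀ (K : Subgroup G) {a b : L}, a ∈ S K → b ∈ S K → a ⊓ b ∈ S K
  sup_mem : ∀ (K : Subgroup G) {a b : L}, a ∈ S K → b ∈ S K → a ⊔ b ∈ S K
  top : Subgroup G → L
  top_mem : ∀ K, top K ∈ S K
  le_top : ∀ K, ∀ a ∈ S K, a ≤ top K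
  conj_eq : ∀ (g : G) (H : Subgroup G), S (conjS g H) = (g • ·) '' S H
  invariant : ∀ (H : Subgroup G), ∀ h ∈ H, ∀ s ∈ S H, h • s = s
  res_mem : ∀ {K H : Subgroup G}, K ≤ H → ∀ s ∈ S H, s ⊓ top K ∈ S K
  top_mono : ∀ {K H : Subgroup G}, K ≤ H → top K ≤ top H

variable {L : Type*} [Lattice L] [MulAction G L]

/-- The action of `G` on pairs `(K, s)`. -/
def dotL (g : G) (x : Subgroup G × L) : Subgroup G × L := (conjS g x.1, g • x.2)

theorem dotL_one (x : Subgroup G × L) : dotL (1 : G) x = x := by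
  simp [dotL, conjS_one]

theorem dotL_mul (g r : G) (x : Subgroup G × L) : dotL g (dotL r x) = dotL (g * r) x := by
  simp [dotL, conjS_mul, mul_smul]

variable (F : SubLatticeFamily G L)

/-- `(K,s) ∈ S(H, M_L)`: the pairs `(K,s)` with `K ≤ H` and `s ∈ L_K`. -/
def memS (H : Subgroup G) (x : Subgroup G × L) : Prop := x.1 ≤ H ∧ x.2 ∈ F.S x.1

/-- `N_H(K,s)`, the stabilizer in `H` of the pair `(K,s)`. -/
def NL (H : Subgroup G) (x : Subgroup G × L) : Subgroup G where
  carrier := {g | g ∈ H ∧ dotL g x = x}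
  one_mem' := ⟨H.one_mem, dotL_one x⟩
  mul_mem' := by
    rintro a b ⟨ha, da⟩ ⟨hb, db⟩
    exact ⟨H.mul_mem ha hb, by rw [← dotL_mul, db, da]⟩
  inv_mem' := by
    rintro a ⟨ha, da⟩
    refine ⟨H.inv_mem ha, ?_⟩
    conv_lhs => rw [← da]
    rw [dotL_mul, inv_mul_cancel, dotL_one]

/-- `|W_H(K,s)| = |N_H(K,s)/K|`. -/
def WCardL (H : Subgroup G) (x : Subgroup G × L) : ℕ := (x.1.subgroupOf (NL H x)).index

/-- A complete set of representatives `R(H, M_L)` of the `H`-orbits of `S(H, M_L)`. -/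
structure RepsL (F : SubLatticeFamily G L) (H : Subgroup G) where
  R : Set (Subgroup G × L)
  subset : ∀ x ∈ R, memS F H x
  complete : ∀ x, memS F H x → ∃! y, y ∈ R ∧ ∃ h ∈ H, dotL h x = y

variable {H : Subgroup G}

/-- The coordinate of a tuple indexed by a set of representatives at (the orbit of) an
arbitrary pair. -/
def coordAtL {A : Type*} [AddCommMonoid A] (ι : Set (Subgroup G × L)) (H : Subgroup G)
    (v : ↥ι → A) (y : Subgroup G × L) : A :=
  ∑ᶠ (k : ↥ι) (_ : ∃ h ∈ H, dotL h y = ↑k), v k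

/-- The class `[(H/K)_s]` expressed with respect to a family indexed by a set of
representatives: it picks out the member of the family lying in the orbit of `(K,s)`. -/
def clsSumL {A : Type*} [AddCommMonoid A] (ι : Set (Subgroup G × L)) (H : Subgroup G)
    (e : ↥ι → A) (y : Subgroup G × L) : A :=
  coordAtL ι H e y

/-- `#{hK ∈ H/K : U ≤ ʰK and t ≤ ʰs}` for `x = (K,s)`, `u = (U,t)`. -/
def invCountLe (H : Subgroup G) (x u : Subgroup G × L) : ℕ :=
  Nat.card {q : ↥H ⧸ x.1.subgroupOf H //
    ∃ h : ↥H, QuotientGroup.mk h = q ∧ u.1 ≤ conjS (h : G) x.1 ∧ u.2 ≤ (h : G) • x.2}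

/-- `#{hK ∈ H/K : U ≤ ʰK and t = res_U(ʰs) = ʰs ∧ sup L_U}` for `x = (K,s)`, `u = (U,t)`. -/
def invCountEq (F : SubLatticeFamily G L) (H : Subgroup G) (x u : Subgroup G × L) : ℕ :=
  Nat.card {q : ↥H ⧸ x.1.subgroupOf H //
    ∃ h : ↥H, QuotientGroup.mk h = q ∧ u.1 ≤ conjS (h : G) x.1 ∧
      u.2 = ((h : G) • x.2) ⊓ F.top u.1}

/-- The mark homomorphism `φ_H` (in coordinates w.r.t. the basis `[(H/K)_s]`). -/
def phiL (R : RepsL F H) (f : ↥R.R → ℤ) : ↥R.R → ℤ :=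
  fun u => ∑ᶠ k : ↥R.R, f k * (invCountEq F H k.1 u.1 : ℤ)

/-- The map `α̃_H` of Theorem 4.10 (in coordinates). -/
def alphaTL (R : RepsL F H) (f : ↥R.R → ℤ) : ↥R.R → ℤ :=
  fun u => ∑ᶠ k : ↥R.R, f k * (invCountLe H k.1 u.1 : ℤ)

/-- The subgroup `⟨r⟩U` generated by `r` and `U`. -/
def cyc (r : G) (U : Subgroup G) : Subgroup G := Subgroup.closure {r} ⊔ U

/-- The least element of `{s ∈ L_P : s ≥ t}` (junk value if there is none). -/
def leastGE [Nonempty L] (P : Subgroup G) (t : L) : L :=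
  Classical.epsilon fun s => (s ∈ F.S P ∧ t ≤ s) ∧ ∀ s', s' ∈ F.S P ∧ t ≤ s' → s ≤ s'

/-- The order of a Sylow `p`-subgroup of a group of order `n`; for `p = 0`
(representing `p = ∞`) it is `n` itself. -/
def sylCard (p n : ℕ) : ℕ := if p = 0 then n else p ^ (n.factorization p)

/-- The multiplicative set `ℤ ∖ (p)` (for `p` prime), resp. the units of `ℤ` (for `p = 0`,
representing `p = ∞`), so that `Localization (locMon p hp)` is `ℤ_(p)`, resp. `ℤ`. -/
def locMon (p : ℕ) (hp : p = 0 ∨ p.Prime) : Submonoid ℤ where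
  carrier := {k | if p = 0 then IsUnit k else ¬ (p : ℤ) ∣ k}
  one_mem' := by
    rcases hp with h | h
    · simp [h]
    · simp only [Set.mem_setOf_eq, if_neg h.ne_zero]
      intro hd
      exact h.one_lt.ne' (by exact_mod_cast Int.eq_one_of_dvd_one (by positivity) hd)
  mul_mem' := by
    intro a b ha hb
    rcases hp with h | h
    · simp only [Set.mem_setOf_eq, if_pos h] at *
      exact ha.mul hb
    · simp only [Set.mem_setOf_eq, if_neg h.ne_zero] at *
      intro hd
      rcases ((Nat.prime_iff_prime_int.mp h).dvd_mul.mp hd) with h1 | h1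
      · exact ha h1
      · exact hb h1

/-- `ℤ_(p)` (with `ℤ_(0)` interpreted as `ℤ_(∞) = ℤ`). -/
abbrev Zp (p : ℕ) (hp : p = 0 ∨ p.Prime) := Localization (locMon p hp)



/-- The map `α_H^{(p)}`. -/
def alphaL {A : Type*} [AddCommMonoid A] [Finite L] (R : RepsL F H) (x : ↥R.R → A) :
    ↥R.R → A :=
  fun u => ∑ᶠ (s : L) (_ : s ∈ F.S u.1.1 ∧ u.1.2 ≤ s), coordAtL R.R H x (u.1.1, s)

/-- The map `β_H^{(p)}`, defined via the Möbius functions of the posets `L_U`. -/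
def betaL {A : Type*} [AddCommGroup A] [Finite L] (R : RepsL F H) (x : ↥R.R → A) :
    ↥R.R → A :=
  fun u => ∑ᶠ (s : L) (hs : s ∈ F.S u.1.1 ∧ u.1.2 ≤ s),
    mob (⟨u.1.2, (R.subset u.1 u.2).2⟩ : ↥(F.S u.1.1)) ⟨s, hs.1⟩ •
      coordAtL R.R H x (u.1.1, s)

variable (p : ℕ) (hp : p = 0 ∨ p.Prime)

/-- `Obs(H, M_L)_(p)`. -/
abbrev ObsL (R : RepsL F H) :=
  ∀ u : ↥R.R, Zp p hp ⧸ Ideal.span {(sylCard p (WCardL H u.1) : Zp p hp)}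

/-- The Cauchy–Frobenius map `ψ̃_H^{(p)}`; `P u` is the choice of the subgroup of
`N_H(U,t)` containing `U` with `(P u)/U` the Sylow `p`-subgroup `W_H(U,t)_p`. -/
def psiTL (R : RepsL F H) (P : ↥R.R → Subgroup G) (x : ↥R.R → Zp p hp) : ObsL F p hp R :=
  fun u => Ideal.Quotient.mk _ (∑ᶠ q : ↥(P u) ⧸ (u.1.1.subgroupOf (P u)),
    ∑ᶠ (s : L) (_ : s ∈ F.S (cyc ((Quotient.out q : ↥(P u)) : G) u.1.1) ∧ u.1.2 ≤ s),
      coordAtL R.R H x (cyc ((Quotient.out q : ↥(P u)) : G) u.1.1, s))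

/-- The map `β̃_H^{(p)}`. -/
def betaTL [Nonempty L] (R : RepsL F H) (P : ↥R.R → Subgroup G) (x : ↥R.R → Zp p hp) :
    ObsL F p hp R :=
  fun u => Ideal.Quotient.mk _ (∑ᶠ q : ↥(P u) ⧸ (u.1.1.subgroupOf (P u)),
    coordAtL R.R H x (cyc ((Quotient.out q : ↥(P u)) : G) u.1.1,
      leastGE F (cyc ((Quotient.out q : ↥(P u)) : G) u.1.1) u.1.2))

/-- `φ_H^{(p)}` with `ℤ_(p)`-coefficients. -/
def phiLp (R : RepsL F H) (f : ↥R.R → Zp p hp) : ↥R.R → Zp p hp :=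
  fun u => ∑ᶠ k : ↥R.R, f k * (invCountEq F H k.1 u.1 : Zp p hp)

/-- The pair `(K ∩ ʰU, res(s ∧ ʰt))` appearing in the product formula. -/
def prodPairL (h : G) (x y : Subgroup G × L) : Subgroup G × L :=
  (x.1 ⊓ conjS h y.1, (x.2 ⊓ h • y.2) ⊓ F.top (x.1 ⊓ conjS h y.1))

/-! `Q ≤ N_H(U,t)` acts on `inv_U((H/K)_s)_{≥t}` by left multiplication: it normalizes `U`,
fixes `t`, and `G` acts monotonically on `L`. The stabilizer of `hK` is `ʰK`, so `U` acts
trivially and the action factors through `Q/U`; moreover `hK` is fixed by `r` exactly when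
`⟨r⟩U ≤ ʰK`. Hence the summand at `rU` is the number of fixed points of `rU`, and Burnside's
lemma turns the sum into `|Q/U|` times the number of orbits. -/

open MulAction

theorem index_dvd_sum_card_fixedBy_out {Q X : Type*} [Group Q] [MulAction Q X] [Finite Q]
    [Finite X] (N : Subgroup Q) [N.Normal] (hN : ∀ n ∈ N, ∀ x : X, n • x = x) :
    N.index ∣ ∑ᶠ q : Q ⧸ N, Nat.card (fixedBy X (Quotient.out q : Q)) := by
  let : MulAction (Q ⧸ N) X := MulAction.compHom X
    (QuotientGroup.lift N (MulAction.toPermHom Q X) fun n hn => Equiv.ext (hN n hn))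
  have fixedBy_out : ∀ q : Q ⧸ N, fixedBy X (Quotient.out q : Q) = fixedBy X q := by
    intro q
    conv_rhs => rw [← QuotientGroup.out_eq' q]
    rfl
  have := Fintype.ofFinite Q
  have := Fintype.ofFinite X
  have := Fintype.ofFinite (Quotient (orbitRel (Q ⧸ N) X))
  rw [finsum_eq_sum_of_fintype]
  simp only [fixedBy_out, Nat.card_eq_fintype_card, Subgroup.index]
  rw [sum_card_fixedBy_eq_card_orbits_mul_card_group]
  exact dvd_mul_left _ _

theorem index_dvd_sum_card_fixed_of_invariant {Γ Q Y : Type*} [Group Γ] [Group Q]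
    [MulAction Γ Y] [Finite Q] (φ : Q →* Γ) (X : Set Y) [Finite X]
    (hX : ∀ (q : Q), ∀ y ∈ X, φ q • y ∈ X) (N : Subgroup Q) [N.Normal]
    (hN : ∀ n ∈ N, ∀ y ∈ X, φ n • y = y) :
    N.index ∣ ∑ᶠ q : Q ⧸ N, Nat.card {y // y ∈ X ∧ φ (Quotient.out q) • y = y} := by
  let : MulAction Q Y := MulAction.compHom Y φ
  let X' : SubMulAction Q Y := ⟨X, fun q _ hy => hX q _ hy⟩
  convert index_dvd_sum_card_fixedBy_out (X := X') N
    (fun n hn y => Subtype.ext (hN n hn y y.2)) using 3 with q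
  exact Nat.card_congr ((Equiv.subtypeSubtypeEquivSubtypeInter (· ∈ X) _).symm.trans
    (Equiv.subtypeEquivRight fun y => by rw [mem_fixedBy, Subtype.ext_iff]; rfl))

theorem cyc_le_iff {r : G} {U M : Subgroup G} : cyc r U ≤ M ↔ r ∈ M ∧ U ≤ M := by
  rw [cyc, sup_le_iff, Subgroup.closure_le, Set.singleton_subset_iff, SetLike.mem_coe]

theorem smul_mk_eq_self_iff {K : Subgroup G} (g h : H) :
    g • (h : H ⧸ K.subgroupOf H) = h ↔ (g : G) ∈ conjS (h : G) K := by
  rw [Quotient.smul_mk, QuotientGroup.eq, Subgroup.mem_subgroupOf, ← K.inv_mem_iff, mem_conjS]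
  simp only [smul_eq_mul, Subgroup.coe_mul, InvMemClass.coe_inv, mul_inv_rev, inv_inv]
  group

theorem normal_subgroupOf_of_le_NL {Q U : Subgroup G} {t : L} (hQN : Q ≤ NL H (U, t)) :
    (U.subgroupOf Q).Normal := by
  have hQU : Q ≤ Subgroup.normalizer (U : Set G) :=
    fun g hg => Subgroup.mem_normalizer_iff_map_conj_eq.mpr (congrArg Prod.fst (hQN hg).2)
  exact Subgroup.normal_subgroupOf_iff_le_normalizer_inf.mpr
    ((le_inf hQU Q.le_normalizer).trans Subgroup.inf_normalizer_le_normalizer_inf)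

/-- `inv_U((H/K)_s)_{≥t}`. -/
def invSet (H K U : Subgroup G) (s t : L) : Set (H ⧸ K.subgroupOf H) :=
  {w | ∃ h : H, (h : H ⧸ K.subgroupOf H) = w ∧ U ≤ conjS (h : G) K ∧ t ≤ (h : G) • s}

variable {K U : Subgroup G} {s t : L}

theorem smul_mem_invSet (hmono : ∀ g : G, Monotone fun x : L => g • x) {g : H}
    (hg : (g : G) ∈ NL H (U, t)) {w : H ⧸ K.subgroupOf H} (hw : w ∈ invSet H K U s t) :
    g • w ∈ invSet H K U s t := by
  obtain ⟨h, rfl, hU, ht⟩ := hw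
  obtain ⟨hgU, hgt⟩ := Prod.ext_iff.mp (hg.2)
  refine ⟨g * h, rfl, ?_, ?_⟩
  · calc U = conjS (g : G) U := hgU.symm
      _ ≤ conjS (g : G) (conjS (h : G) K) := conjS_mono _ hU
      _ = conjS ((g * h : H) : G) K := conjS_mul _ _ _
  · calc t = (g : G) • t := hgt.symm
      _ ≤ (g : G) • (h : G) • s := hmono _ ht
      _ = ((g * h : H) : G) • s := (mul_smul _ _ _).symm

theorem smul_eq_self_of_mem_invSet {g : H} (hg : (g : G) ∈ U) {w : H ⧸ K.subgroupOf H}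
    (hw : w ∈ invSet H K U s t) : g • w = w := by
  obtain ⟨h, rfl, hU, -⟩ := hw
  exact (smul_mk_eq_self_iff g h).mpr (hU hg)

theorem exists_cyc_le_iff (r : H) (w : H ⧸ K.subgroupOf H) :
    (∃ h : H, (h : H ⧸ K.subgroupOf H) = w ∧ U ≤ conjS (h : G) K ∧ t ≤ (h : G) • s ∧
      cyc (r : G) U ≤ conjS (h : G) K) ↔ w ∈ invSet H K U s t ∧ r • w = w := by
  constructor
  · rintro ⟨h, rfl, hU, ht, hr⟩
    exact ⟨⟨h, rfl, hU, ht⟩, (smul_mk_eq_self_iff r h).mpr (cyc_le_iff.mp hr).1⟩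
  · rintro ⟨⟨h, rfl, hU, ht⟩, hr⟩
    exact ⟨h, rfl, hU, ht, cyc_le_iff.mpr ⟨(smul_mk_eq_self_iff r h).mp hr, hU⟩⟩

theorem lattice_orbit_count_dvd [Finite G] (K U : Subgroup G) (s t : L)
    (hKs : memS F H (K, s)) (Q : Subgroup G) (hQN : Q ≤ NL H (U, t)) :
    (U.subgroupOf Q).index ∣
      ∑ᶠ q : ↥Q ⧸ U.subgroupOf Q,
        Nat.card {w : ↥H ⧸ K.subgroupOf H //
          ∃ h : ↥H, QuotientGroup.mk h = w ∧ U ≤ conjS (h : G) K ∧ t ≤ (h : G) • s ∧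
            cyc ((Quotient.out q : ↥Q) : G) U ≤ conjS (h : G) K} := by
  have hQH : Q ≤ H := fun g hg => (hQN hg).1
  have := normal_subgroupOf_of_le_NL hQN
  convert index_dvd_sum_card_fixed_of_invariant (Subgroup.inclusion hQH) (invSet H K U s t)
    (fun q _ hw => smul_mem_invSet (fun g _ _ => F.smul_le g _ _) (hQN q.2) hw) (U.subgroupOf Q)
    (fun u hu _ hw => smul_eq_self_of_mem_invSet (g := Subgroup.inclusion hQH u) hu hw)
    using 3 with q
  exact Nat.card_congr
    (Equiv.subtypeEquivRight fun w => exists_cyc_le_iff (Subgroup.inclusion hQH q.out) w)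

end
end LB
end

section
/- Let G be a finite group and L a finite G-lattice with a family of nonempty sublattices L_H as in the lattice Burnside ring setting. Let X ⊆ S(G,M_L) be closed under the G-action and suppose Condition (A) holds: for every (U,t) ∈ X and gU ∈ W_G(U,t), the set {(K,s) ∈ X : K ≥ ⟨g⟩U and s ≥ s_{(g,t)}}, where s_{(g,t)} = inf{s ∈ L_{⟨g⟩U} : s ≥ t}, has a unique minimal element (⟨g⟩U̅, s̅_{(g,t)}) with respect to the componentwise order. Let X̅ = R(G,M_L) ∩ X, let Ω(G,X)_(p) be the free Z_(p)-module on [(G/K)_s] for (K,s) ∈ X̅, let Ω̃(G,X)_(p) = ∏_{(K,s)∈X̅} Z_(p), let Obs(G,X)_(p) = ∏_{(K,s)∈X̅} Z_(p)/|W_G(K,s)_p|Z_(p), let φ_X^{(p)} : Ω(G,X)_(p) → Ω̃(G,X)_(p) send [(G/H)_s] to (#{gH ∈ G/H : U ≤ ᵍH and t ≤ ᵍs})_{(U,t)∈X̅}, and let ψ_X^{(p)} : Ω̃(G,X)_(p) → Obs(G,X)_(p) send (x_{(H,s)})_{(H,s)∈X̅} to (Σ_{gU ∈ W_G(U,t)_p}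 x_{(⟨g⟩U̅, s̅_{(g,t)})} mod |W_G(U,t)_p|)_{(U,t)∈X̅}. Then the sequence 0 → Ω(G,X)_(p) →^{φ_X^{(p)}} Ω̃(G,X)_(p) →^{ψ_X^{(p)}} Obs(G,X)_(p) → 0 of Z_(p)-modules is exact, and Ω(G,X)_(p) admits a Z_(p)-algebra structure for which φ_X^{(p)} is an injective Z_(p)-algebra homomorphism into the product ring ∏_{(K,s)∈X̅} Z_(p). -/
/-!
Order pairs by subconjugacy: `(U,t) ≼ (K,s)` iff `U ≤ ᵍK` and `t ≤ ᵍs` for some `g`. On orbit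
representatives this is a partial order, since an order-preserving action of a finite group
cannot move an element strictly upwards. Both `φ_X` and `ψ_X` are triangular for `≼`: the
diagonal of `φ_X` is `|W_G(U,t)|`, and at a `≼`-maximal point `u` of the support of `y` one has
`ψ_X(y)_u = y_u mod |W_G(u)_p|`. Peeling off maximal points therefore gives injectivity of
`φ_X`, surjectivity of `ψ_X`, and `ker ψ_X ⊆ im φ_X` (there `|W_G(u)_p|` divides `y_u`, and
`|W_G(u)| / |W_G(u)_p|` is a unit of `ℤ_(p)`).

For `ψ_X ∘ φ_X = 0`, condition (A) shows that the cosets `aK` with `(U,t) ≤ ᵃ(K,s)` that are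
fixed by `g ∈ N_G(U,t)` are exactly those with `(⟨g⟩U̅, s̅_{(g,t)}) ≤ ᵃ(K,s)`. So the
`(U,t)`-coordinate of `ψ_X(φ_X[(G/K)_s])` is a Burnside sum over `W_G(U,t)_p`, which is
divisible by `|W_G(U,t)_p|`. The same count for the action on pairs of cosets shows that
`im φ_X = ker ψ_X` is closed under products. It also contains `1`, since
`ψ_X(1)_u = |W_G(u)_p| ≡ 0`.
-/

set_option linter.unusedSectionVars false
set_option linter.unusedVariables false

open scoped Classical

namespace LB
noncomputable section

variable {G : Type*} [Group G]

variable {L : Type*} [Lattice L] [MulAction G L]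

variable (F : SubLatticeFamily G L)

variable {H : Subgroup G}

variable (p : ℕ) (hp : p = 0 ∨ p.Prime)

/-- The unique minimal element `(⟨g⟩U̅, s̅_{(g,t)})` of
`{(K,s) ∈ X : (K,s) ≥ (⟨g⟩U, s_{(g,t)})}` provided by Condition (A)
(junk value if it does not exist). -/
def minChoice [Nonempty L] (X : Set (Subgroup G × L)) (x : Subgroup G × L) (g : G) :
    Subgroup G × L :=
  Classical.epsilon fun y =>
    (y ∈ X ∧ cyc g x.1 ≤ y.1 ∧ leastGE F (cyc g x.1) x.2 ≤ y.2) ∧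
    ∀ z : Subgroup G × L,
      z ∈ X ∧ cyc g x.1 ≤ z.1 ∧ leastGE F (cyc g x.1) x.2 ≤ z.2 →
      z.1 ≤ y.1 ∧ z.2 ≤ y.2 → z = y

/-- The Burnside map `φ_X^{(p)} : Ω(G,X)_(p) → Ω̃(G,X)_(p)`. -/
def phiX (R : RepsL F (⊤ : Subgroup G)) (X : Set (Subgroup G × L))
    (f : ↥(R.R ∩ X) → Zp p hp) : ↥(R.R ∩ X) → Zp p hp :=
  fun u => ∑ᶠ k : ↥(R.R ∩ X), f k * (invCountLe (⊤ : Subgroup G) k.1 u.1 : Zp p hp)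

/-- The Cauchy–Frobenius map `ψ_X^{(p)} : Ω̃(G,X)_(p) → Obs(G,X)_(p)`. -/
def psiX [Nonempty L] (R : RepsL F (⊤ : Subgroup G)) (X : Set (Subgroup G × L))
    (P : ↥(R.R ∩ X) → Subgroup G) (x : ↥(R.R ∩ X) → Zp p hp) :
    ∀ u : ↥(R.R ∩ X),
      Zp p hp ⧸ Ideal.span {(sylCard p (WCardL (⊤ : Subgroup G) u.1) : Zp p hp)} :=
  fun u => Ideal.Quotient.mk _
    (∑ᶠ q : ↥(P u) ⧸ (u.1.1.subgroupOf (P u)),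
      coordAtL (R.R ∩ X) ⊤ x (minChoice F X u.1 ((Quotient.out q : ↥(P u)) : G)))

section Conjugation

theorem card_conjS (g : G) (K : Subgroup G) : Nat.card (conjS g K) = Nat.card K :=
  Subgroup.card_map_of_injective (MulAut.conj g).injective

theorem conjS_eq_of_le [Finite G] {g : G} {K : Subgroup G} (h : K ≤ conjS g K) :
    conjS g K = K :=
  (Subgroup.eq_of_le_of_card_ge h (card_conjS g K).le).symm

theorem cyc_le {g : G} {U K : Subgroup G} (hg : g ∈ K) (hU : U ≤ K) : cyc g U ≤ K :=
  sup_le ((Subgroup.closure_le K).mpr (Set.singleton_subset_iff.mpr hg)) hU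

theorem le_cyc (g : G) (U : Subgroup G) : U ≤ cyc g U := le_sup_right

theorem mem_cyc (g : G) (U : Subgroup G) : g ∈ cyc g U :=
  (le_sup_left : Subgroup.closure {g} ≤ cyc g U) (Subgroup.subset_closure rfl)

theorem cyc_eq_of_mem {g : G} {U : Subgroup G} (hg : g ∈ U) : cyc g U = U :=
  le_antisymm (cyc_le hg le_rfl) (le_cyc g U)

end Conjugation

theorem smul_eq_of_le_smul {M α : Type*} [Monoid M] [MulAction M α] [PartialOrder α] {g : M}
    (hg : IsOfFinOrder g) (hmono : Monotone (g • · : α → α)) {x : α} (h : x ≤ g • x) :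
    g • x = x := by
  have le_pow_smul : ∀ n : ℕ, x ≤ g ^ n • x := by
    intro n
    induction n with
    | zero => rw [pow_zero, one_smul]
    | succ n ih => exact h.trans ((hmono ih).trans_eq (by rw [pow_succ', mul_smul]))
  refine le_antisymm ?_ h
  calc g • x ≤ g • (g ^ (orderOf g - 1) • x) := hmono (le_pow_smul _)
    _ = x := by
      rw [smul_smul, ← pow_succ', Nat.sub_add_cancel hg.orderOf_pos, pow_orderOf_eq_one, one_smul]

section Pairs

theorem dotL_inv_dotL (g : G) (x : Subgroup G × L) : dotL g⁻¹ (dotL g x) = x := by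
  rw [dotL_mul, inv_mul_cancel, dotL_one]

theorem dotL_dotL_inv (g : G) (x : Subgroup G × L) : dotL g (dotL g⁻¹ x) = x := by
  rw [dotL_mul, mul_inv_cancel, dotL_one]

include F in
theorem dotL_mono (g : G) : Monotone (dotL g : Subgroup G × L → Subgroup G × L) :=
  fun _ _ h => ⟨conjS_mono g h.1, F.smul_le g _ _ h.2⟩

include F in
theorem dotL_le_iff_le_dotL_inv {g : G} {x y : Subgroup G × L} :
    dotL g x ≤ y ↔ x ≤ dotL g⁻¹ y :=
  ⟨fun h => (dotL_inv_dotL g x).symm.trans_le (dotL_mono F g⁻¹ h),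
    fun h => (dotL_mono F g h).trans_eq (dotL_dotL_inv g y)⟩

include F in
theorem dotL_eq_of_le_dotL [Finite G] {g : G} {x : Subgroup G × L} (h : x ≤ dotL g x) :
    dotL g x = x :=
  Prod.ext (conjS_eq_of_le h.1)
    (smul_eq_of_le_smul (isOfFinOrder_of_finite g) (fun _ _ => F.smul_le g _ _) h.2)

def Subconj (x y : Subgroup G × L) : Prop := ∃ g : G, x ≤ dotL g y

theorem subconj_refl (x : Subgroup G × L) : Subconj x x := ⟨1, (dotL_one x).ge⟩

theorem subconj_of_le_of_dotL_eq {x y z : Subgroup G × L} {g : G} (hxy : x ≤ y)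
    (hyz : dotL g y = z) : Subconj x z :=
  ⟨g⁻¹, hxy.trans_eq (by rw [← hyz, dotL_inv_dotL])⟩

include F in
theorem Subconj.trans {x y z : Subgroup G × L} (hxy : Subconj x y) (hyz : Subconj y z) :
    Subconj x z :=
  let ⟨g, hg⟩ := hxy
  let ⟨h, hh⟩ := hyz
  ⟨g * h, hg.trans ((dotL_mono F g hh).trans_eq (dotL_mul g h z))⟩

include F in
theorem exists_dotL_eq_of_subconj [Finite G] {x y : Subgroup G × L} (hxy : Subconj x y)
    (hyx : Subconj y x) : ∃ g : G, dotL g y = x := by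
  obtain ⟨g, hg⟩ := hxy
  obtain ⟨h, hh⟩ := hyx
  have hfix : dotL (g * h) x = x :=
    dotL_eq_of_le_dotL F (hg.trans ((dotL_mono F g hh).trans_eq (dotL_mul g h x)))
  refine ⟨g, le_antisymm ?_ hg⟩
  calc dotL g y ≤ dotL g (dotL h x) := dotL_mono F g hh
    _ = x := by rw [dotL_mul, hfix]

end Pairs

section Representatives

variable {F}

theorem RepsL.eq_of_dotL_eq (R : RepsL F ⊤) {x y : Subgroup G × L} (hx : x ∈ R.R)
    (hy : y ∈ R.R) {g : G} (h : dotL g x = y) : x = y :=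
  (R.complete x (R.subset x hx)).unique ⟨hx, 1, Subgroup.one_mem _, dotL_one x⟩
    ⟨hy, g, Subgroup.mem_top g, h⟩

theorem RepsL.eq_of_subconj [Finite G] (R : RepsL F ⊤) {x y : Subgroup G × L} (hx : x ∈ R.R)
    (hy : y ∈ R.R) (hxy : Subconj x y) (hyx : Subconj y x) : x = y :=
  let ⟨_, hg⟩ := exists_dotL_eq_of_subconj F hxy hyx
  (R.eq_of_dotL_eq hy hx hg).symm

def repLE (R : RepsL F ⊤) (X : Set (Subgroup G × L)) (a b : ↥(R.R ∩ X)) : Prop :=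
  Subconj (a : Subgroup G × L) b

instance [Finite G] (R : RepsL F ⊤) (X : Set (Subgroup G × L)) :
    IsPartialOrder ↥(R.R ∩ X) (repLE R X) where
  refl _ := subconj_refl _
  trans _ _ _ := Subconj.trans F
  antisymm a b hab hba := Subtype.ext (R.eq_of_subconj a.2.1 b.2.1 hab hba)

theorem exists_dotL_eq_rep (R : RepsL F ⊤) {X : Set (Subgroup G × L)}
    (hXact : ∀ g : G, ∀ x ∈ X, dotL g x ∈ X) (hXS : ∀ x ∈ X, memS F ⊤ x)
    {y : Subgroup G × L} (hy : y ∈ X) : ∃ (k : ↥(R.R ∩ X)) (g : G), dotL g y = k := by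
  obtain ⟨k, ⟨hkR, g, -, hg⟩, -⟩ := R.complete y (hXS y hy)
  exact ⟨⟨k, hkR, hg ▸ hXact g y hy⟩, g, hg⟩

theorem coordAtL_eq (R : RepsL F ⊤) (X : Set (Subgroup G × L)) {A : Type*} [AddCommMonoid A]
    (v : ↥(R.R ∩ X) → A) {y : Subgroup G × L} {k : ↥(R.R ∩ X)} {g : G}
    (hk : dotL g y = k) : coordAtL (R.R ∩ X) ⊤ v y = v k := by
  rw [coordAtL, finsum_eq_single _ k, finsum_eq_if, if_pos ⟨g, Subgroup.mem_top g, hk⟩]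
  intro j hj
  rw [finsum_eq_if, if_neg]
  rintro ⟨h, -, hh⟩
  refine hj (Subtype.ext (R.eq_of_dotL_eq j.2.1 k.2.1 (g := g * h⁻¹) ?_))
  rw [← hh, dotL_mul, inv_mul_cancel_right, hk]

theorem coordAtL_add [Finite G] [Finite L] (R : RepsL F ⊤) (X : Set (Subgroup G × L))
    {A : Type*} [AddCommMonoid A] (v w : ↥(R.R ∩ X) → A) (y : Subgroup G × L) :
    coordAtL (R.R ∩ X) ⊤ (v + w) y = coordAtL (R.R ∩ X) ⊤ v y + coordAtL (R.R ∩ X) ⊤ w y := by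
  simp only [coordAtL, Pi.add_apply, finsum_eq_if]
  rw [← finsum_add_distrib (Set.toFinite _) (Set.toFinite _)]
  exact finsum_congr fun k => by split_ifs <;> simp

end Representatives

section Triangular

variable {ι : Type*} (r : ι → ι → Prop) [IsPartialOrder ι r]
  {A : ι → Type*} [∀ i, AddGroup (A i)]

theorem exists_maximal_support [Finite ι] {y : ∀ i, A i} (hy : y ≠ 0) :
    ∃ u, y u ≠ 0 ∧ ∀ k, y k ≠ 0 → r u k → k = u := by
  let above : ι → ι → Prop := fun k u => r u k ∧ k ≠ u
  have : IsTrans ι above := ⟨fun a b c ⟨hba, hab⟩ ⟨hcb, hbc⟩ =>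
    ⟨trans_of r hcb hba, fun hac => hab (antisymm_of r (hac ▸ hcb) hba)⟩⟩
  have : Std.Irrefl above := ⟨fun a h => h.2 rfl⟩
  obtain ⟨u, hu, hmax⟩ := (Finite.wellFounded_of_trans_of_irrefl above).has_min
    {i | y i ≠ 0} (Function.ne_iff.mp hy)
  exact ⟨u, hu, fun k hk hrk => by_contra fun hne => hmax k hk ⟨hrk, hne⟩⟩

def lowerSupport (y : ∀ i, A i) : Set ι := {k | ∃ j, y j ≠ 0 ∧ r k j}

theorem lowerSupport_sub_ssubset {y s : ∀ i, A i} {u : ι} (hu : y u ≠ 0)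
    (hmax : ∀ k, y k ≠ 0 → r u k → k = u) (hsu : s u = y u) (hs : ∀ v, s v ≠ 0 → r v u) :
    lowerSupport r (y - s) ⊂ lowerSupport r y := by
  have hs' : ∀ j, (y - s) j ≠ 0 → y j = 0 → r j u := fun j hj hyj =>
    hs j fun hsj => hj (by rw [Pi.sub_apply, hyj, hsj, sub_zero])
  have hsub : lowerSupport r (y - s) ⊆ lowerSupport r y := by
    rintro k ⟨j, hj, hkj⟩
    by_cases hyj : y j = 0
    · exact ⟨u, hu, trans_of r hkj (hs' j hj hyj)⟩
    · exact ⟨j, hyj, hkj⟩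
  refine (Set.ssubset_iff_of_subset hsub).2 ⟨u, ⟨u, hu, refl_of r u⟩, ?_⟩
  rintro ⟨j, hj, huj⟩
  have hju : j = u := by
    by_cases hyj : y j = 0
    · exact antisymm_of r (hs' j hj hyj) huj
    · exact hmax j hyj huj
  exact hj (by rw [hju, Pi.sub_apply, hsu, sub_self])

theorem le_of_triangular [Finite ι] {S T : AddSubgroup (∀ i, A i)} (hST : S ≤ T)
    (h : ∀ y ∈ T, ∀ u, y u ≠ 0 → (∀ k, y k ≠ 0 → r u k → k = u) →
      ∃ s ∈ S, s u = y u ∧ ∀ v, s v ≠ 0 → r v u) :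
    T ≤ S := by
  intro y hy
  induction hn : (lowerSupport r y).ncard using Nat.strong_induction_on generalizing y with
  | _ n ih =>
  rcases eq_or_ne y 0 with rfl | hy0
  · exact S.zero_mem
  obtain ⟨u, hu, hmax⟩ := exists_maximal_support r hy0
  obtain ⟨s, hsS, hsu, hs⟩ := h y hy u hu hmax
  have hlt := Set.ncard_lt_ncard (lowerSupport_sub_ssubset r hu hmax hsu hs)
  simpa using S.add_mem (ih _ (hn ▸ hlt) (T.sub_mem hy (hST hsS)) rfl) hsS

end Triangular

section Least

theorem isLeast_of_existsUnique_minimal {α : Type*} [PartialOrder α] {s : Set α}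
    (hs : s.Finite) (h : ∃! m, m ∈ s ∧ ∀ z ∈ s, z ≤ m → z = m) {m : α}
    (hm : m ∈ s ∧ ∀ z ∈ s, z ≤ m → z = m) : IsLeast s m := by
  refine ⟨hm.1, fun z hz => ?_⟩
  obtain ⟨b, hbz, hb⟩ := hs.exists_le_minimal hz
  have hbm : b = m := h.unique ⟨hb.1, fun z hz hzb => le_antisymm hzb (hb.2 hz hzb)⟩ hm
  exact hbm ▸ hbz

variable [Finite L] [Nonempty L]

theorem isLeast_leastGE {K : Subgroup G} {t : L} (h : ∃ s ∈ F.S K, t ≤ s) :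
    IsLeast {s | s ∈ F.S K ∧ t ≤ s} (leastGE F K t) := by
  obtain ⟨m, ⟨hmS, htm⟩, hmin⟩ := (Set.toFinite {s | s ∈ F.S K ∧ t ≤ s}).exists_minimal
    (let ⟨s, hs, hts⟩ := h; ⟨s, hs, hts⟩)
  have hm : IsLeast {s | s ∈ F.S K ∧ t ≤ s} m := ⟨⟨hmS, htm⟩, fun s hs =>
    (hmin ⟨F.inf_mem K hmS hs.1, le_inf htm hs.2⟩ inf_le_left).trans inf_le_right⟩
  exact Classical.epsilon_spec (p := fun s => IsLeast {s | s ∈ F.S K ∧ t ≤ s} s) ⟨m, hm⟩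

theorem isLeast_leastGE_cyc {x : Subgroup G × L} (hx : x.2 ∈ F.S x.1) (g : G) :
    IsLeast {s | s ∈ F.S (cyc g x.1) ∧ x.2 ≤ s} (leastGE F (cyc g x.1) x.2) :=
  isLeast_leastGE F ⟨F.top _, F.top_mem _, (F.le_top _ _ hx).trans (F.top_mono (le_cyc g x.1))⟩

theorem leastGE_eq_self {K : Subgroup G} {t : L} (ht : t ∈ F.S K) : leastGE F K t = t :=
  (isLeast_leastGE F ⟨t, ht, le_rfl⟩).unique ⟨⟨ht, le_rfl⟩, fun _ hs => hs.2⟩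

def ConditionA (X : Set (Subgroup G × L)) : Prop :=
  ∀ x ∈ X, ∀ g ∈ NL (⊤ : Subgroup G) x,
    ∃! y : Subgroup G × L,
      (y ∈ X ∧ cyc g x.1 ≤ y.1 ∧ leastGE F (cyc g x.1) x.2 ≤ y.2) ∧
      ∀ z : Subgroup G × L,
        z ∈ X ∧ cyc g x.1 ≤ z.1 ∧ leastGE F (cyc g x.1) x.2 ≤ z.2 →
        z.1 ≤ y.1 ∧ z.2 ≤ y.2 → z = y

variable [Finite G] {X : Set (Subgroup G × L)} (hA : ConditionA F X) {x : Subgroup G × L}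
  (hx : x ∈ X) {g : G} (hg : g ∈ NL (⊤ : Subgroup G) x)
include hA hx hg

theorem isLeast_minChoice :
    IsLeast {z | z ∈ X ∧ cyc g x.1 ≤ z.1 ∧ leastGE F (cyc g x.1) x.2 ≤ z.2}
      (minChoice F X x g) :=
  isLeast_of_existsUnique_minimal (Set.toFinite _) (hA x hx g hg)
    (Classical.epsilon_spec (hA x hx g hg).exists)

theorem minChoice_mem : minChoice F X x g ∈ X := (isLeast_minChoice F hA hx hg).1.1

theorem le_minChoice (hx2 : x.2 ∈ F.S x.1) : x ≤ minChoice F X x g :=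
  ⟨(le_cyc g x.1).trans (isLeast_minChoice F hA hx hg).1.2.1,
    (isLeast_leastGE_cyc F hx2 g).1.2.trans (isLeast_minChoice F hA hx hg).1.2.2⟩

theorem minChoice_of_mem (hx2 : x.2 ∈ F.S x.1) (hgx : g ∈ x.1) : minChoice F X x g = x := by
  refine (isLeast_minChoice F hA hx hg).unique ⟨?_, fun z hz => ?_⟩
  · exact ⟨hx, by rw [cyc_eq_of_mem hgx], by rw [cyc_eq_of_mem hgx, leastGE_eq_self F hx2]⟩
  · obtain ⟨-, hz1, hz2⟩ := hz
    rw [cyc_eq_of_mem hgx] at hz1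
    rw [cyc_eq_of_mem hgx, leastGE_eq_self F hx2] at hz2
    exact ⟨hz1, hz2⟩

theorem mem_of_dotL_minChoice_eq (hx2 : x.2 ∈ F.S x.1) {h : G}
    (he : dotL h (minChoice F X x g) = x) : g ∈ x.1 := by
  have hcyc := (isLeast_minChoice F hA hx hg).1.2.1
  have hcard : Nat.card (minChoice F X x g).1 ≤ Nat.card x.1 := by
    rw [← congrArg Prod.fst he]
    exact (card_conjS h _).ge
  have heq := Subgroup.eq_of_le_of_card_ge (le_minChoice F hA hx hg hx2).1 hcard
  exact heq ▸ hcyc (mem_cyc g x.1)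

end Least

theorem minChoice_le_dotL_iff [Finite G] [Finite L] [Nonempty L] {X : Set (Subgroup G × L)}
    (hXact : ∀ g : G, ∀ x ∈ X, dotL g x ∈ X) (hXS : ∀ x ∈ X, memS F ⊤ x) (hA : ConditionA F X)
    {u : Subgroup G × L} (hu : u ∈ X) {n : G} (hn : n ∈ NL (⊤ : Subgroup G) u)
    {k : Subgroup G × L} (hk : k ∈ X) (a : G) :
    minChoice F X u n ≤ dotL a k ↔ u ≤ dotL a k ∧ n ∈ conjS a k.1 := by
  have hleast := isLeast_minChoice F hA hu hn
  have hu2 : u.2 ∈ F.S u.1 := (hXS u hu).2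
  constructor
  · intro h
    exact ⟨(le_minChoice F hA hu hn hu2).trans h, h.1 (hleast.1.2.1 (mem_cyc n u.1))⟩
  · rintro ⟨hle, hnk⟩
    have hcyc : cyc n u.1 ≤ conjS a k.1 := cyc_le hnk hle.1
    have hak : a • k.2 ∈ F.S (conjS a k.1) := by
      rw [F.conj_eq]
      exact ⟨k.2, (hXS k hk).2, rfl⟩
    have hres : a • k.2 ⊓ F.top (cyc n u.1) ∈ F.S (cyc n u.1) := F.res_mem hcyc _ hak
    have hut : u.2 ≤ F.top (cyc n u.1) := (F.le_top _ _ hu2).trans (F.top_mono (le_cyc n u.1))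
    refine hleast.2 ⟨hXact a k hk, hcyc, ?_⟩
    exact ((isLeast_leastGE_cyc F hu2 n).2 ⟨hres, le_inf hle.2 hut⟩).trans inf_le_left

section Cosets

def CosetAbove (u k : Subgroup G × L) (q : ↥(⊤ : Subgroup G) ⧸ k.1.subgroupOf ⊤) : Prop :=
  ∃ a : ↥(⊤ : Subgroup G), QuotientGroup.mk a = q ∧ u ≤ dotL (a : G) k

theorem invCountLe_eq_card (k u : Subgroup G × L) :
    invCountLe ⊤ k u = Nat.card {q // CosetAbove u k q} := rfl

theorem subconj_of_invCountLe_ne_zero {k u : Subgroup G × L} (h : invCountLe ⊤ k u ≠ 0) :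
    Subconj u k :=
  let ⟨⟨⟨_, a, _, ha⟩⟩, _⟩ := Nat.card_ne_zero.mp h
  ⟨a, ha⟩

include F in
theorem cosetAbove_dotL_smul_iff (g : ↥(⊤ : Subgroup G)) {u k : Subgroup G × L}
    (q : ↥(⊤ : Subgroup G) ⧸ k.1.subgroupOf ⊤) :
    CosetAbove (dotL (g : G) u) k (g • q) ↔ CosetAbove u k q := by
  constructor
  · rintro ⟨a, ha, h⟩
    refine ⟨g⁻¹ * a, ?_, ?_⟩
    · change g⁻¹ • (QuotientGroup.mk a : ↥(⊤ : Subgroup G) ⧸ k.1.subgroupOf ⊤) = q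
      rw [ha, inv_smul_smul]
    · rw [dotL_le_iff_le_dotL_inv F, dotL_mul] at h
      exact h
  · rintro ⟨a, rfl, h⟩
    exact ⟨g * a, rfl, (dotL_mono F g h).trans_eq (dotL_mul _ _ _)⟩

include F in
theorem invCountLe_dotL (k : Subgroup G × L) (g : G) (y : Subgroup G × L) :
    invCountLe ⊤ k (dotL g y) = invCountLe ⊤ k y :=
  Nat.card_congr (Equiv.subtypeEquiv
    (MulAction.toPerm (⟨g, Subgroup.mem_top g⟩ : ↥(⊤ : Subgroup G)))
    fun q => (cosetAbove_dotL_smul_iff F _ q).symm).symm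

include F in
theorem invCountLe_self [Finite G] (x : Subgroup G × L) : invCountLe ⊤ x x = WCardL ⊤ x := by
  let e := Subgroup.quotientSubgroupOfEmbeddingOfLE x.1 (s := NL ⊤ x) (t := ⊤) le_top
  have hrange : ∀ q, CosetAbove x x q ↔ q ∈ Set.range e := by
    intro q
    constructor
    · rintro ⟨a, rfl, h⟩
      exact ⟨QuotientGroup.mk ⟨a, Subgroup.mem_top _, dotL_eq_of_le_dotL F h⟩, rfl⟩
    · rintro ⟨z, rfl⟩
      induction z using QuotientGroup.induction_on with
      | H n => exact ⟨Subgroup.inclusion le_top n, rfl, n.2.2.ge⟩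
  rw [invCountLe_eq_card, WCardL, Subgroup.index_eq_card,
    Nat.card_congr (Equiv.subtypeEquivRight hrange), Nat.card_range_of_injective e.injective]

def cosetPerm (P K : Subgroup G) : ↥P →* Equiv.Perm (↥(⊤ : Subgroup G) ⧸ K.subgroupOf ⊤) :=
  (MulAction.toPermHom ↥(⊤ : Subgroup G) _).comp (Subgroup.inclusion le_top)

theorem cosetPerm_mk_eq_iff {P K : Subgroup G} (n : ↥P) (a : ↥(⊤ : Subgroup G)) :
    cosetPerm P K n (QuotientGroup.mk a) = QuotientGroup.mk a ↔ (n : G) ∈ conjS (a : G) K := by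
  change (QuotientGroup.mk (Subgroup.inclusion le_top n * a) :
    ↥(⊤ : Subgroup G) ⧸ K.subgroupOf ⊤) = QuotientGroup.mk a ↔ _
  rw [QuotientGroup.eq, Subgroup.mem_subgroupOf, mem_conjS, ← K.inv_mem_iff]
  simp only [mul_inv_rev, Subgroup.coe_mul, Subgroup.coe_inv, Subgroup.coe_inclusion, inv_inv,
    mul_assoc]

variable {u : Subgroup G × L} {P : Subgroup G} (hP : P ≤ NL (⊤ : Subgroup G) u)

include F hP in
theorem cosetAbove_cosetPerm_iff (k : Subgroup G × L) (n : ↥P)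
    (q : ↥(⊤ : Subgroup G) ⧸ k.1.subgroupOf ⊤) :
    CosetAbove u k (cosetPerm P k.1 n q) ↔ CosetAbove u k q := by
  have h := cosetAbove_dotL_smul_iff F (Subgroup.inclusion le_top n) (u := u) q
  rwa [Subgroup.coe_inclusion, (hP n.2).2] at h

def cosetAbovePerm (k : Subgroup G × L) : ↥P →* Equiv.Perm {q // CosetAbove u k q} where
  toFun n := (cosetPerm P k.1 n).subtypePerm (cosetAbove_cosetPerm_iff F hP k n)
  map_one' := Equiv.ext fun y => Subtype.ext (by simp)
  map_mul' m n := Equiv.ext fun y => Subtype.ext (by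
    change cosetPerm P k.1 (m * n) y.1 = cosetPerm P k.1 m (cosetPerm P k.1 n y.1)
    rw [map_mul, Equiv.Perm.mul_apply])

theorem cosetAbovePerm_eq_one (k : Subgroup G × L) {v : ↥P} (hv : v ∈ u.1.subgroupOf P) :
    cosetAbovePerm F hP k v = 1 := by
  refine Equiv.ext fun ⟨q, a, ha, h⟩ => Subtype.ext ?_
  change cosetPerm P k.1 v q = q
  rw [← ha, cosetPerm_mk_eq_iff]
  exact h.1 hv

theorem card_fixed_cosetAbovePerm [Finite G] [Finite L] [Nonempty L] {X : Set (Subgroup G × L)}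
    (hXact : ∀ g : G, ∀ x ∈ X, dotL g x ∈ X) (hXS : ∀ x ∈ X, memS F ⊤ x) (hA : ConditionA F X)
    (hu : u ∈ X) {k : Subgroup G × L} (hk : k ∈ X) (n : ↥P) :
    Nat.card {y // cosetAbovePerm F hP k n y = y} = invCountLe ⊤ k (minChoice F X u n) := by
  have hfix : ∀ q, (CosetAbove u k q ∧ cosetPerm P k.1 n q = q) ↔
      CosetAbove (minChoice F X u n) k q := by
    intro q
    constructor
    · rintro ⟨⟨a, rfl, h⟩, hq⟩
      exact ⟨a, rfl, (minChoice_le_dotL_iff F hXact hXS hA hu (hP n.2) hk a).2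
        ⟨h, (cosetPerm_mk_eq_iff n a).1 hq⟩⟩
    · rintro ⟨a, rfl, h⟩
      obtain ⟨h1, h2⟩ := (minChoice_le_dotL_iff F hXact hXS hA hu (hP n.2) hk a).1 h
      exact ⟨⟨a, rfl, h1⟩, (cosetPerm_mk_eq_iff n a).2 h2⟩
  rw [invCountLe_eq_card]
  exact Nat.card_congr ((Equiv.subtypeEquivRight fun y => Subtype.ext_iff).trans
    ((Equiv.subtypeSubtypeEquivSubtypeInter _ _).trans (Equiv.subtypeEquivRight hfix)))

end Cosets

section Burnside

variable {Γ Y Y' : Type*} [Group Γ]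

/-- By Burnside's lemma the sum is the number of orbits times `[Γ : V]`. -/
theorem index_dvd_sum_card_fixed [Finite Γ] [Finite Y] (V : Subgroup Γ)
    (a : Γ →* Equiv.Perm Y) (hV : ∀ v ∈ V, a v = 1) :
    V.index ∣ ∑ᶠ q : Γ ⧸ V, Nat.card {y : Y // a q.out y = y} := by
  classical
  have := Fintype.ofFinite Γ
  have := Fintype.ofFinite Y
  have := Fintype.ofFinite (Γ ⧸ V)
  let _ : MulAction Γ Y := MulAction.compHom Y a
  have := Fintype.ofFinite (MulAction.orbitRel.Quotient Γ Y)
  set fix : Γ ⧸ V → ℕ := fun q => Nat.card {y : Y // a q.out y = y}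
  have hfix : ∀ g : Γ, Fintype.card (MulAction.fixedBy Y g) = fix g := by
    intro g
    have hg : a g = a (g : Γ ⧸ V).out := by
      have hv : (g : Γ ⧸ V).out⁻¹ * g ∈ V := QuotientGroup.eq.mp (QuotientGroup.out_eq' _)
      conv_lhs => rw [← mul_inv_cancel_left (g : Γ ⧸ V).out g]
      rw [map_mul, hV _ hv, mul_one]
    rw [← Nat.card_eq_fintype_card]
    exact congrArg (fun σ : Equiv.Perm Y => Nat.card {y : Y // σ y = y}) hg
  have hfib : ∀ q : Γ ⧸ V, Fintype.card {g : Γ // (g : Γ ⧸ V) = q} = Nat.card V := by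
    intro q
    rw [← Nat.card_eq_fintype_card]
    exact (QuotientGroup.card_preimage_mk V {q}).trans (by simp)
  have hsum : ∑ g : Γ, Fintype.card (MulAction.fixedBy Y g) = Nat.card V * ∑ q, fix q :=
    calc ∑ g : Γ, Fintype.card (MulAction.fixedBy Y g) = ∑ g : Γ, fix g :=
          Finset.sum_congr rfl fun g _ => hfix g
      _ = ∑ q, ∑ g : {g : Γ // (g : Γ ⧸ V) = q}, fix g := (Fintype.sum_fiberwise _ _).symm
      _ = ∑ q, Nat.card V * fix q := Finset.sum_congr rfl fun q _ => by
          rw [Finset.sum_congr rfl fun g _ => congrArg fix g.2, Finset.sum_const,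
            Finset.card_univ, hfib q, smul_eq_mul]
      _ = Nat.card V * ∑ q, fix q := Finset.mul_sum _ _ _ |>.symm
  have hB := MulAction.sum_card_fixedBy_eq_card_orbits_mul_card_group Γ Y
  rw [hsum, ← Nat.card_eq_fintype_card (α := Γ), ← V.index_mul_card] at hB
  have hfix_sum : ∑ q, fix q = Fintype.card (MulAction.orbitRel.Quotient Γ Y) * V.index :=
    Nat.eq_of_mul_eq_mul_left Nat.card_pos (by rw [hB]; ring)
  rw [finsum_eq_sum_of_fintype, hfix_sum]
  exact dvd_mul_left _ _

def prodPermHom (a : Γ →* Equiv.Perm Y) (b : Γ →* Equiv.Perm Y') : Γ →* Equiv.Perm (Y × Y') where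
  toFun n := (a n).prodCongr (b n)
  map_one' := Equiv.ext fun _ => by simp
  map_mul' _ _ := Equiv.ext fun _ => by simp [Prod.map]

theorem card_fixed_prodPermHom (a : Γ →* Equiv.Perm Y) (b : Γ →* Equiv.Perm Y') (n : Γ) :
    Nat.card {z // prodPermHom a b n z = z} =
      Nat.card {y // a n y = y} * Nat.card {y' // b n y' = y'} := by
  rw [← Nat.card_prod]
  exact Nat.card_congr ((Equiv.subtypeEquivRight
    (q := fun z : Y × Y' => a n z.1 = z.1 ∧ b n z.2 = z.2) fun _ => Prod.ext_iff).trans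
    (Equiv.subtypeProdEquivProd (α := Y) (β := Y') (p := fun y => a n y = y)
      (q := fun y' => b n y' = y')))

theorem out_mem_iff_eq_mk_one {V : Subgroup Γ} (q : Γ ⧸ V) :
    q.out ∈ V ↔ q = QuotientGroup.mk 1 := by
  conv_rhs => rw [← QuotientGroup.out_eq' q]
  rw [QuotientGroup.eq, mul_one, inv_mem_iff]

end Burnside

section Divisibility

variable [Finite G] [Finite L] [Nonempty L] {X : Set (Subgroup G × L)}
  (hXact : ∀ g : G, ∀ x ∈ X, dotL g x ∈ X) (hXS : ∀ x ∈ X, memS F ⊤ x) (hA : ConditionA F X)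
  {u : Subgroup G × L} (hu : u ∈ X) {P : Subgroup G} (hP : P ≤ NL (⊤ : Subgroup G) u)
include hXact hXS hA hu hP

theorem index_dvd_sum_invCountLe {k : Subgroup G × L} (hk : k ∈ X) :
    (u.1.subgroupOf P).index ∣
      ∑ᶠ q : ↥P ⧸ u.1.subgroupOf P, invCountLe ⊤ k (minChoice F X u (q.out : G)) := by
  have h := index_dvd_sum_card_fixed (u.1.subgroupOf P) (cosetAbovePerm F hP k)
    fun _ hv => cosetAbovePerm_eq_one F hP k hv
  simpa only [card_fixed_cosetAbovePerm F hP hXact hXS hA hu hk] using h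

theorem index_dvd_sum_invCountLe_mul {k k' : Subgroup G × L} (hk : k ∈ X) (hk' : k' ∈ X) :
    (u.1.subgroupOf P).index ∣
      ∑ᶠ q : ↥P ⧸ u.1.subgroupOf P, invCountLe ⊤ k (minChoice F X u (q.out : G)) *
        invCountLe ⊤ k' (minChoice F X u (q.out : G)) := by
  have h := index_dvd_sum_card_fixed (u.1.subgroupOf P)
    (prodPermHom (cosetAbovePerm F hP k) (cosetAbovePerm F hP k'))
    fun _ hv => by
      simp only [prodPermHom, MonoidHom.coe_mk, OneHom.coe_mk, cosetAbovePerm_eq_one F hP _ hv]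
      rfl
  simpa only [card_fixed_prodPermHom, card_fixed_cosetAbovePerm F hP hXact hXS hA hu hk,
    card_fixed_cosetAbovePerm F hP hXact hXS hA hu hk'] using h

end Divisibility

theorem dvd_finsum_finsum_mul {ι κ R : Type*} [Finite ι] [Finite κ] [CommSemiring R] {d : R}
    (a : ι → R) (c : ι → κ → R) (h : ∀ i, d ∣ ∑ᶠ q, c i q) :
    d ∣ ∑ᶠ q, ∑ᶠ i, a i * c i q := by
  have := Fintype.ofFinite ι
  have := Fintype.ofFinite κ
  simp only [finsum_eq_sum_of_fintype] at h ⊢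
  rw [Finset.sum_comm]
  exact Finset.dvd_sum fun i _ => by rw [← Finset.mul_sum]; exact dvd_mul_of_dvd_right (h i) _

theorem finsum_mul_finsum_eq_finsum_prod {ι R : Type*} [Finite ι] [CommSemiring R]
    (a b c c' : ι → R) :
    (∑ᶠ i, a i * c i) * ∑ᶠ j, b j * c' j = ∑ᶠ z : ι × ι, a z.1 * b z.2 * (c z.1 * c' z.2) := by
  have := Fintype.ofFinite ι
  simp only [finsum_eq_sum_of_fintype, Finset.sum_mul_sum, ← Finset.univ_product_univ,
    Finset.sum_product]
  exact Finset.sum_congr rfl fun _ _ => Finset.sum_congr rfl fun _ _ => by ring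

section Localization

theorem locMon_le_nonZeroDivisors : locMon p hp ≤ nonZeroDivisors ℤ := by
  intro k hk
  have hk' : if p = 0 then IsUnit k else ¬ (p : ℤ) ∣ k := hk
  apply mem_nonZeroDivisors_of_ne_zero
  rcases hp with h | h
  · rw [if_pos h] at hk'
    exact hk'.ne_zero
  · rw [if_neg h.ne_zero] at hk'
    rintro rfl
    exact hk' (dvd_zero _)

instance : IsDomain (Zp p hp) :=
  IsLocalization.isDomain_localization (locMon_le_nonZeroDivisors p hp)

instance : CharZero (Zp p hp) :=
  ⟨fun a b hab => by
    have h := IsLocalization.injective (Zp p hp) (locMon_le_nonZeroDivisors p hp)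
      (show algebraMap ℤ (Zp p hp) a = algebraMap ℤ (Zp p hp) b by
        rwa [map_natCast, map_natCast])
    exact_mod_cast h⟩

theorem exists_isUnit_natCast_eq_sylCard_mul {n : ℕ} (hn : n ≠ 0) :
    ∃ c : Zp p hp, IsUnit c ∧ (n : Zp p hp) = sylCard p n * c := by
  by_cases h : p = 0
  · exact ⟨1, isUnit_one, by rw [sylCard, if_pos h, mul_one]⟩
  have hmem : ((n / p ^ n.factorization p : ℕ) : ℤ) ∈ locMon p hp := by
    change if p = 0 then _ else _
    rw [if_neg h]
    exact fun hdvd => Nat.not_dvd_ordCompl (hp.resolve_left h) hn (by exact_mod_cast hdvd)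
  refine ⟨((n / p ^ n.factorization p : ℕ) : Zp p hp), ?_, ?_⟩
  · simpa only [map_natCast] using IsLocalization.map_units (Zp p hp) ⟨_, hmem⟩
  · rw [sylCard, if_neg h, ← Nat.cast_mul, Nat.ordProj_mul_ordCompl_eq_self]

end Localization

section Maps

variable {R : RepsL F ⊤} {X : Set (Subgroup G × L)}

def phiXLinear [Finite G] [Finite L] (R : RepsL F ⊤) (X : Set (Subgroup G × L)) :
    (↥(R.R ∩ X) → Zp p hp) →ₗ[Zp p hp] ↥(R.R ∩ X) → Zp p hp where
  toFun := phiX F p hp R X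
  map_add' f f' := funext fun u => by
    simp only [phiX, Pi.add_apply, add_mul]
    exact finsum_add_distrib (Set.toFinite _) (Set.toFinite _)
  map_smul' c f := funext fun u => by
    simp only [phiX, Pi.smul_apply, smul_eq_mul, RingHom.id_apply, mul_assoc]
    exact (mul_finsum _ c).symm

theorem exists_ne_zero_of_phiX_ne_zero {f : ↥(R.R ∩ X) → Zp p hp} {v : ↥(R.R ∩ X)}
    (h : phiX F p hp R X f v ≠ 0) : ∃ k, f k ≠ 0 ∧ repLE R X v k := by
  by_contra! hcon
  refine h (finsum_eq_zero_of_forall_eq_zero fun k => ?_)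
  by_cases hk : f k = 0
  · rw [hk, zero_mul]
  · have hc : invCountLe ⊤ k.1 v.1 = 0 :=
      by_contra fun hc => hcon k hk (subconj_of_invCountLe_ne_zero hc)
    rw [hc, Nat.cast_zero, mul_zero]

theorem phiX_apply_of_maximal [Finite G] {f : ↥(R.R ∩ X) → Zp p hp} {u : ↥(R.R ∩ X)}
    (hmax : ∀ k, f k ≠ 0 → repLE R X u k → k = u) :
    phiX F p hp R X f u = f u * (WCardL ⊤ u.1 : Zp p hp) := by
  refine (finsum_eq_single _ u fun k hk => ?_).trans (by rw [invCountLe_self F])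
  by_cases hfk : f k = 0
  · rw [hfk, zero_mul]
  · have hc : invCountLe ⊤ k.1 u.1 = 0 :=
      by_contra fun hc => hk (hmax k hfk (subconj_of_invCountLe_ne_zero hc))
    rw [hc, Nat.cast_zero, mul_zero]

theorem phiX_injective [Finite G] [Finite L] : Function.Injective (phiX F p hp R X) := by
  refine (injective_iff_map_eq_zero (phiXLinear F p hp R X)).2 fun f hf => by_contra fun hf0 => ?_
  obtain ⟨u, hu, hmax⟩ := exists_maximal_support (repLE R X) hf0
  have hfu := congrFun hf u
  rw [phiXLinear, LinearMap.coe_mk, AddHom.coe_mk, phiX_apply_of_maximal F p hp hmax] at hfu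
  exact mul_ne_zero hu (Nat.cast_ne_zero.2 Subgroup.index_ne_zero_of_finite) hfu

theorem psiX_add [Finite G] [Finite L] [Nonempty L] (P : ↥(R.R ∩ X) → Subgroup G)
    (x y : ↥(R.R ∩ X) → Zp p hp) :
    psiX F p hp R X P (x + y) = psiX F p hp R X P x + psiX F p hp R X P y := by
  funext u
  simp only [psiX, Pi.add_apply, coordAtL_add]
  rw [finsum_add_distrib (Set.toFinite _) (Set.toFinite _), map_add]

def psiXAddHom [Finite G] [Finite L] [Nonempty L] (R : RepsL F ⊤) (X : Set (Subgroup G × L))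
    (P : ↥(R.R ∩ X) → Subgroup G) :
    (↥(R.R ∩ X) → Zp p hp) →+
      ∀ u : ↥(R.R ∩ X), Zp p hp ⧸ Ideal.span {(sylCard p (WCardL ⊤ u.1) : Zp p hp)} :=
  AddMonoidHom.mk' (psiX F p hp R X P) (psiX_add F p hp P)

variable (hXact : ∀ g : G, ∀ x ∈ X, dotL g x ∈ X) (hXS : ∀ x ∈ X, memS F ⊤ x)
include hXact hXS

theorem coordAtL_phiX (f : ↥(R.R ∩ X) → Zp p hp) {y : Subgroup G × L} (hy : y ∈ X) :
    coordAtL (R.R ∩ X) ⊤ (phiX F p hp R X f) y = ∑ᶠ k, f k * (invCountLe ⊤ k.1 y : Zp p hp) := by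
  obtain ⟨k₀, g, hg⟩ := exists_dotL_eq_rep R hXact hXS hy
  rw [coordAtL_eq R X _ hg]
  simp only [phiX, ← hg, invCountLe_dotL F]

theorem coordAtL_mul {A : Type*} [NonUnitalNonAssocSemiring A] (v w : ↥(R.R ∩ X) → A)
    {y : Subgroup G × L} (hy : y ∈ X) :
    coordAtL (R.R ∩ X) ⊤ (v * w) y = coordAtL (R.R ∩ X) ⊤ v y * coordAtL (R.R ∩ X) ⊤ w y := by
  obtain ⟨k₀, g, hg⟩ := exists_dotL_eq_rep R hXact hXS hy
  rw [coordAtL_eq R X _ hg, coordAtL_eq R X _ hg, coordAtL_eq R X _ hg, Pi.mul_apply]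

theorem coordAtL_const {A : Type*} [AddCommMonoid A] (c : A) {y : Subgroup G × L}
    (hy : y ∈ X) : coordAtL (R.R ∩ X) ⊤ (fun _ => c) y = c := by
  obtain ⟨k₀, g, hg⟩ := exists_dotL_eq_rep R hXact hXS hy
  exact coordAtL_eq R X _ hg

variable [Finite G] [Finite L] [Nonempty L] {P : ↥(R.R ∩ X) → Subgroup G}
  (hA : ConditionA F X) (hPN : ∀ u, P u ≤ NL (⊤ : Subgroup G) u.1)
include hA hPN

theorem psiX_apply_of_maximal {y : ↥(R.R ∩ X) → Zp p hp} {u : ↥(R.R ∩ X)}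
    (hmax : ∀ k, y k ≠ 0 → repLE R X u k → k = u) :
    psiX F p hp R X P y u = Ideal.Quotient.mk _ (y u) := by
  have hu2 : u.1.2 ∈ F.S u.1.1 := (hXS u.1 u.2.2).2
  simp only [psiX]
  refine congrArg _ ((finsum_eq_single _ (QuotientGroup.mk 1) fun q hq => ?_).trans ?_)
  · obtain ⟨k, g, hg⟩ := exists_dotL_eq_rep R hXact hXS
      (minChoice_mem F hA u.2.2 (hPN u (q.out).2))
    rw [coordAtL_eq R X y hg]
    by_contra hk
    have hku : k = u :=
      hmax k hk (subconj_of_le_of_dotL_eq (le_minChoice F hA u.2.2 (hPN u (q.out).2) hu2) hg)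
    rw [hku] at hg
    exact hq ((out_mem_iff_eq_mk_one q).1
      (mem_of_dotL_minChoice_eq F hA u.2.2 (hPN u (q.out).2) hu2 hg))
  · set q₁ : ↥(P u) ⧸ u.1.1.subgroupOf (P u) := QuotientGroup.mk 1
    have hone : (q₁.out : G) ∈ u.1.1 := (out_mem_iff_eq_mk_one q₁).2 rfl
    rw [minChoice_of_mem F hA u.2.2 (hPN u q₁.out.2) hu2 hone,
      coordAtL_eq R X y (dotL_one _)]

theorem exists_ne_zero_of_psiX_ne_zero {y : ↥(R.R ∩ X) → Zp p hp} {v : ↥(R.R ∩ X)}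
    (h : psiX F p hp R X P y v ≠ 0) : ∃ k, y k ≠ 0 ∧ repLE R X v k := by
  by_contra! hcon
  have hzero : ∀ q : ↥(P v) ⧸ v.1.1.subgroupOf (P v),
      coordAtL (R.R ∩ X) ⊤ y (minChoice F X v.1 (q.out : G)) = 0 := by
    intro q
    have hm := hPN v (q.out).2
    obtain ⟨k, g, hg⟩ := exists_dotL_eq_rep R hXact hXS (minChoice_mem F hA v.2.2 hm)
    rw [coordAtL_eq R X y hg]
    by_contra hk
    exact hcon k hk
      (subconj_of_le_of_dotL_eq (le_minChoice F hA v.2.2 hm (hXS v.1 v.2.2).2) hg)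
  exact h (by simp only [psiX, hzero, finsum_zero, map_zero])

theorem psiX_phiX_eq_zero
    (hPidx : ∀ u : ↥(R.R ∩ X), (u.1.1.subgroupOf (P u)).index = sylCard p (WCardL ⊤ u.1))
    (f : ↥(R.R ∩ X) → Zp p hp) : psiX F p hp R X P (phiX F p hp R X f) = 0 := by
  funext u
  have hc : ∀ q : ↥(P u) ⧸ u.1.1.subgroupOf (P u),
      coordAtL (R.R ∩ X) ⊤ (phiX F p hp R X f) (minChoice F X u.1 (q.out : G)) =
        ∑ᶠ k, f k * (invCountLe ⊤ k.1 (minChoice F X u.1 (q.out : G)) : Zp p hp) :=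
    fun q => coordAtL_phiX F p hp hXact hXS f (minChoice_mem F hA u.2.2 (hPN u (q.out).2))
  simp only [psiX, Pi.zero_apply, Ideal.Quotient.eq_zero_iff_dvd, hc]
  refine dvd_finsum_finsum_mul _ _ fun k => ?_
  rw [← hPidx u, ← Nat.cast_finsum]
  exact Nat.cast_dvd_cast (index_dvd_sum_invCountLe F hXact hXS hA u.2.2 (hPN u) k.2.2)

theorem psiX_phiX_mul_eq_zero
    (hPidx : ∀ u : ↥(R.R ∩ X), (u.1.1.subgroupOf (P u)).index = sylCard p (WCardL ⊤ u.1))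
    (f f' : ↥(R.R ∩ X) → Zp p hp) :
    psiX F p hp R X P (phiX F p hp R X f * phiX F p hp R X f') = 0 := by
  funext u
  have hc : ∀ q : ↥(P u) ⧸ u.1.1.subgroupOf (P u),
      coordAtL (R.R ∩ X) ⊤ (phiX F p hp R X f * phiX F p hp R X f')
          (minChoice F X u.1 (q.out : G)) =
        ∑ᶠ z : ↥(R.R ∩ X) × ↥(R.R ∩ X), f z.1 * f' z.2 *
          ((invCountLe ⊤ z.1.1 (minChoice F X u.1 (q.out : G)) : Zp p hp) *
            invCountLe ⊤ z.2.1 (minChoice F X u.1 (q.out : G))) := by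
    intro q
    have hm := minChoice_mem F hA u.2.2 (hPN u (q.out).2)
    rw [coordAtL_mul F hXact hXS _ _ hm, coordAtL_phiX F p hp hXact hXS _ hm,
      coordAtL_phiX F p hp hXact hXS _ hm, finsum_mul_finsum_eq_finsum_prod]
  simp only [psiX, Pi.zero_apply, Ideal.Quotient.eq_zero_iff_dvd, hc]
  refine dvd_finsum_finsum_mul _ _ fun k => ?_
  rw [← hPidx u]
  exact_mod_cast Nat.cast_dvd_cast (α := Zp p hp)
    (index_dvd_sum_invCountLe_mul F hXact hXS hA u.2.2 (hPN u) k.1.2.2 k.2.2.2)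

theorem psiX_one_eq_zero
    (hPidx : ∀ u : ↥(R.R ∩ X), (u.1.1.subgroupOf (P u)).index = sylCard p (WCardL ⊤ u.1)) :
    psiX F p hp R X P (fun _ => 1) = 0 := by
  funext u
  have := Fintype.ofFinite (↥(P u) ⧸ u.1.1.subgroupOf (P u))
  have hc : ∀ q : ↥(P u) ⧸ u.1.1.subgroupOf (P u),
      coordAtL (R.R ∩ X) ⊤ (fun _ => (1 : Zp p hp)) (minChoice F X u.1 (q.out : G)) = 1 :=
    fun q => coordAtL_const F hXact hXS 1 (minChoice_mem F hA u.2.2 (hPN u (q.out).2))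
  simp only [psiX, Pi.zero_apply, Ideal.Quotient.eq_zero_iff_dvd, hc, finsum_eq_sum_of_fintype,
    Finset.sum_const, Finset.card_univ, nsmul_one, ← Nat.card_eq_fintype_card,
    ← Subgroup.index_eq_card, hPidx u, dvd_refl]

theorem ker_psiX_le_range_phiX
    (hPidx : ∀ u : ↥(R.R ∩ X), (u.1.1.subgroupOf (P u)).index = sylCard p (WCardL ⊤ u.1)) :
    (psiXAddHom F p hp R X P).ker ≤ (LinearMap.range (phiXLinear F p hp R X)).toAddSubgroup := by
  refine le_of_triangular (repLE R X)
    (fun _ ⟨f, hf⟩ => hf ▸ psiX_phiX_eq_zero F p hp hXact hXS hA hPN hPidx f)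
    fun y hy u hu hmax => ?_
  have hdvd : (sylCard p (WCardL ⊤ u.1) : Zp p hp) ∣ y u := by
    rw [← Ideal.Quotient.eq_zero_iff_dvd, ← psiX_apply_of_maximal F p hp hXact hXS hA hPN hmax]
    exact congrFun (AddMonoidHom.mem_ker.1 hy) u
  obtain ⟨d, hd⟩ := hdvd
  obtain ⟨c, hc, hW⟩ := exists_isUnit_natCast_eq_sylCard_mul p hp (n := WCardL ⊤ u.1)
    Subgroup.index_ne_zero_of_finite
  have hsingle : ∀ k, (Pi.single u (↑hc.unit⁻¹ * d) : ↥(R.R ∩ X) → Zp p hp) k ≠ 0 → k = u :=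
    fun k hk => by_contra fun hne => hk (Pi.single_eq_of_ne hne _)
  refine ⟨phiX F p hp R X (Pi.single u (↑hc.unit⁻¹ * d)), ⟨_, rfl⟩, ?_, fun v hv => ?_⟩
  · rw [phiX_apply_of_maximal F p hp fun k hk _ => hsingle k hk, Pi.single_eq_same, hW, hd]
    calc ↑hc.unit⁻¹ * d * (↑(sylCard p (WCardL ⊤ u.1)) * c)
        = ↑(sylCard p (WCardL ⊤ u.1)) * d * (↑hc.unit⁻¹ * c) := by ring
      _ = ↑(sylCard p (WCardL ⊤ u.1)) * d := by rw [IsUnit.val_inv_mul, mul_one]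
  · obtain ⟨k, hk, hvk⟩ := exists_ne_zero_of_phiX_ne_zero F p hp hv
    rwa [hsingle k hk] at hvk

theorem psiX_surjective : Function.Surjective (psiX F p hp R X P) := by
  have hrange : (⊤ : AddSubgroup _) ≤ (psiXAddHom F p hp R X P).range := by
    refine le_of_triangular (repLE R X) le_top fun b _ u _ _ => ?_
    obtain ⟨c, hc⟩ := Ideal.Quotient.mk_surjective (b u)
    have hsingle : ∀ k, (Pi.single u c : ↥(R.R ∩ X) → Zp p hp) k ≠ 0 → k = u :=
      fun k hk => by_contra fun hne => hk (Pi.single_eq_of_ne hne _)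
    refine ⟨psiX F p hp R X P (Pi.single u c), ⟨_, rfl⟩, ?_, fun v hv => ?_⟩
    · rw [psiX_apply_of_maximal F p hp hXact hXS hA hPN fun k hk _ => hsingle k hk,
        Pi.single_eq_same, hc]
    · obtain ⟨k, hk, hvk⟩ := exists_ne_zero_of_psiX_ne_zero F p hp hXact hXS hA hPN hv
      rwa [hsingle k hk] at hvk
  exact fun b => hrange (AddSubgroup.mem_top b)

end Maps

/-- For a `G`-stable subset `X ⊆ S(G, M_L)` satisfying Condition (A),
the sequence `0 → Ω(G,X)_(p) → Ω̃(G,X)_(p) → Obs(G,X)_(p) → 0` is exact, and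
`Ω(G,X)_(p)` admits a `ℤ_(p)`-algebra structure for which `φ_X^{(p)}` is an injective
`ℤ_(p)`-algebra homomorphism into the product ring (equivalently, the range of
`φ_X^{(p)}` is a `ℤ_(p)`-subalgebra of `∏ ℤ_(p)`). -/
theorem partial_lattice_burnside [Finite G] [Finite L] [Nonempty L]
    (R : RepsL F (⊤ : Subgroup G)) (X : Set (Subgroup G × L))
    (hXact : ∀ g : G, ∀ x ∈ X, dotL g x ∈ X)
    (hXS : ∀ x ∈ X, memS F ⊤ x)
    (hA : ∀ x ∈ X, ∀ g ∈ NL (⊤ : Subgroup G) x,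
      ∃! y : Subgroup G × L,
        (y ∈ X ∧ cyc g x.1 ≤ y.1 ∧ leastGE F (cyc g x.1) x.2 ≤ y.2) ∧
        ∀ z : Subgroup G × L,
          z ∈ X ∧ cyc g x.1 ≤ z.1 ∧ leastGE F (cyc g x.1) x.2 ≤ z.2 →
          z.1 ≤ y.1 ∧ z.2 ≤ y.2 → z = y)
    (P : ↥(R.R ∩ X) → Subgroup G)
    (hP : ∀ u : ↥(R.R ∩ X), u.1.1 ≤ P u ∧ P u ≤ NL (⊤ : Subgroup G) u.1 ∧
      (u.1.1.subgroupOf (P u)).index = sylCard p (WCardL (⊤ : Subgroup G) u.1)) :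
    Function.Injective (phiX F p hp R X) ∧
    Function.Exact (phiX F p hp R X) (psiX F p hp R X P) ∧
    Function.Surjective (psiX F p hp R X P) ∧
    ∃ Salg : Subalgebra (Zp p hp) (↥(R.R ∩ X) → Zp p hp),
      (Salg : Set (↥(R.R ∩ X) → Zp p hp)) = Set.range (phiX F p hp R X) := by
  have hPN : ∀ u, P u ≤ NL ⊤ u.1 := fun u => (hP u).2.1
  have hPidx := fun u => (hP u).2.2
  have hker : ∀ y, psiX F p hp R X P y = 0 → y ∈ Set.range (phiX F p hp R X) :=
    fun y hy => ker_psiX_le_range_phiX F p hp hXact hXS hA hPN hPidx hy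
  refine ⟨phiX_injective F p hp, fun y => ⟨hker y, ?_⟩,
    psiX_surjective F p hp hXact hXS hA hPN, ?_⟩
  · rintro ⟨f, rfl⟩
    exact psiX_phiX_eq_zero F p hp hXact hXS hA hPN hPidx f
  refine ⟨(LinearMap.range (phiXLinear F p hp R X)).toSubalgebra ?_ ?_, LinearMap.coe_range _⟩
  · exact hker _ (psiX_one_eq_zero F p hp hXact hXS hA hPN hPidx)
  · rintro _ _ ⟨f, rfl⟩ ⟨f', rfl⟩
    exact hker _ (psiX_phiX_mul_eq_zero F p hp hXact hXS hA hPN hPidx f f')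

end
end LB
end
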